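/- For every θ ∈ (0,1) there exist constants C > 0 and δ₀ ∈ (0,1), depending only on θ, with the following property. Let γ > 0 and let Ṽ : ℤ → ℝ be such that for every nonzero finitely supported l : ℤ → ℤ one has |∑_{n∈ℤ} l_n·(n² + Ṽ_n)| ≥ γ·∏_{n∈ℤ} (1 + l_n²·w(n)⁴)^{−1}. Then for every δ ∈ (0,δ₀) and every nonzero finitely supported l : ℤ → ℤ one has |∑_{n∈ℤ} l_n·(n² + Ṽ_n)| ≥ γ·exp( −C·δ^{−5/θ} − δ·∑_{n∈ℤ} |l_n|·w(n)^{θ/2} ). -/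

import Mathlib

/-!
Taking logarithms, it suffices to bound `∑ log (1 + l_n² w(n)⁴)` by
`δ ∑ |l_n| w(n)^{θ/2} + C δ^{-5/θ}`. Site by site, `log (1 + x² w⁴) ≤ 1 + 2 log x + 4 log w`.
Once `δ w^{θ/4} ≥ 20/θ`, the term `δ x w^{θ/2}` absorbs all of this; the remaining sites have
`|n| ≤ (20/(θδ))^{4/θ}`, and on each of them the excess is `O(1/(θ²δ))`.
-/

open scoped BigOperators

/-- `w(n) = max(1, |n|)` as a real number. -/
noncomputable def wR (n : ℤ) : ℝ := max 1 |(n : ℝ)|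

open Real Finset

lemma one_le_wR (n : ℤ) : 1 ≤ wR n := le_max_left _ _

lemma abs_le_wR (n : ℤ) : |(n : ℝ)| ≤ wR n := le_max_right _ _

lemma log_le_mul_add_log_inv {ε x : ℝ} (hε : 0 < ε) (hx : 0 < x) :
    log x ≤ ε * x + log ε⁻¹ := by
  have h : log x = log (ε * x) + log ε⁻¹ := by
    rw [← log_mul (by positivity) (by positivity), mul_comm ε, mul_assoc,
      mul_inv_cancel₀ hε.ne', mul_one]
  linarith [log_le_sub_one_of_pos (mul_pos hε hx)]

lemma log_one_add_le_one_add_log {a : ℝ} (ha : 1 ≤ a) : log (1 + a) ≤ 1 + log a := by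
  have h : log (1 + a) ≤ log (2 * a) := log_le_log (by positivity) (by linarith)
  rw [log_mul two_ne_zero (by positivity)] at h
  linarith [log_two_lt_d9]

lemma log_one_add_sq_mul_pow_four_le {x w : ℝ} (hx : 1 ≤ x) (hw : 1 ≤ w) :
    log (1 + x ^ 2 * w ^ 4) ≤ 1 + 2 * log x + 4 * log w := by
  have h := log_one_add_le_one_add_log (one_le_mul_of_one_le_of_one_le
    (one_le_pow₀ hx (n := 2)) (one_le_pow₀ hw (n := 4)))
  rw [log_mul (by positivity) (by positivity), log_pow, log_pow] at h
  push_cast at h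
  linarith

lemma four_mul_log_le_rpow {θ w : ℝ} (hθ : 0 < θ) (hw : 0 ≤ w) :
    4 * log w ≤ 16 / θ * w ^ (θ / 4) := by
  have h := log_le_rpow_div hw (by positivity : 0 < θ / 4)
  calc 4 * log w ≤ 4 * (w ^ (θ / 4) / (θ / 4)) := by gcongr
    _ = 16 / θ * w ^ (θ / 4) := by field_simp; ring

lemma log_one_add_sq_mul_pow_four_le_of_le {θ δ x w : ℝ} (hθ0 : 0 < θ) (hθ1 : θ ≤ 1)
    (hx : 1 ≤ x) (hw : 1 ≤ w) (hlarge : 20 / θ ≤ δ * w ^ (θ / 4)) :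
    log (1 + x ^ 2 * w ^ 4) ≤ δ * x * w ^ (θ / 2) := by
  have hlogw := four_mul_log_le_rpow hθ0 (by linarith : 0 ≤ w)
  set u := w ^ (θ / 4)
  have hu : 1 ≤ u := one_le_rpow hw (by positivity)
  have hsq : w ^ (θ / 2) = u ^ 2 := by
    rw [← rpow_natCast, ← rpow_mul (by linarith)]; ring_nf
  have hlogx : log x ≤ x := by linarith [log_le_sub_one_of_pos (by linarith : 0 < x)]
  have key : 1 + 2 * x + 16 / θ * u ≤ 20 / θ * (x * u) := by
    have h1 : 1 ≤ 1 / θ := by rw [le_div_iff₀ hθ0]; linarith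
    have hxu : x ≤ x * u := le_mul_of_one_le_right (by linarith) hu
    have hux : u ≤ x * u := le_mul_of_one_le_left (by linarith) hx
    have e : 20 / θ * (x * u) = 1 / θ * (4 * (x * u)) + 16 / θ * (x * u) := by ring
    have e' : 16 / θ * u ≤ 16 / θ * (x * u) := by gcongr
    nlinarith
  calc log (1 + x ^ 2 * w ^ 4) ≤ 1 + 2 * log x + 4 * log w :=
        log_one_add_sq_mul_pow_four_le hx hw
    _ ≤ 1 + 2 * x + 16 / θ * u := by linarith
    _ ≤ 20 / θ * (x * u) := key
    _ ≤ (δ * u) * (x * u) := by gcongr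
    _ = δ * x * w ^ (θ / 2) := by rw [hsq]; ring

lemma log_one_add_sq_mul_pow_four_le_of_lt {θ δ x w : ℝ} (hθ0 : 0 < θ) (hθ1 : θ ≤ 1)
    (hδ0 : 0 < δ) (hδ1 : δ ≤ 1) (hx : 1 ≤ x) (hw : 1 ≤ w) (hsmall : δ * w ^ (θ / 4) < 20 / θ) :
    log (1 + x ^ 2 * w ^ 4) ≤ δ * x * w ^ (θ / 2) + 325 / (θ ^ 2 * δ) := by
  have hlogw := four_mul_log_le_rpow hθ0 (by linarith : 0 ≤ w)
  have hlogx := log_le_mul_add_log_inv (by positivity : 0 < δ / 2) (by linarith : 0 < x)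
  have hlog2δ : log (δ / 2)⁻¹ ≤ 2 / δ := by
    have := log_le_sub_one_of_pos (by positivity : 0 < (δ / 2)⁻¹)
    rw [inv_div] at this ⊢; linarith
  have hu : w ^ (θ / 4) < 20 / (θ * δ) := by
    rw [lt_div_iff₀ (by positivity)]; rw [lt_div_iff₀ hθ0] at hsmall; linarith
  have hx_le : δ * x ≤ δ * x * w ^ (θ / 2) :=
    le_mul_of_one_le_right (by positivity) (one_le_rpow hw (by positivity))
  have hθδ : θ ^ 2 * δ ≤ δ := mul_le_of_le_one_left hδ0.le (pow_le_one₀ hθ0.le hθ1)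
  have e : 325 / (θ ^ 2 * δ) = 1 / (θ ^ 2 * δ) + 4 / (θ ^ 2 * δ) + 16 / θ * (20 / (θ * δ)) := by
    field_simp; ring
  have h1 : 1 ≤ 1 / (θ ^ 2 * δ) := by rw [le_div_iff₀ (by positivity)]; linarith
  have h4 : 4 / δ ≤ 4 / (θ ^ 2 * δ) := by gcongr
  have h16 : 16 / θ * w ^ (θ / 4) ≤ 16 / θ * (20 / (θ * δ)) := by gcongr
  calc log (1 + x ^ 2 * w ^ 4) ≤ 1 + 2 * log x + 4 * log w :=
        log_one_add_sq_mul_pow_four_le hx hw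
    _ ≤ δ * x + 1 + 4 / δ + 16 / θ * w ^ (θ / 4) := by
        have : 4 / δ = 2 * (2 / δ) := by ring
        linarith
    _ ≤ δ * x * w ^ (θ / 2) + 325 / (θ ^ 2 * δ) := by linarith

lemma card_filter_abs_le_le (s : Finset ℤ) {R : ℝ} (hR : 0 ≤ R) :
    (#{n ∈ s | |((n : ℤ) : ℝ)| ≤ R} : ℝ) ≤ 2 * R + 1 := by
  set M := ⌊R⌋
  have hM : 0 ≤ M := Int.floor_nonneg.mpr hR
  have hsub : {n ∈ s | |((n : ℤ) : ℝ)| ≤ R} ⊆ Icc (-M) M := fun n hn => by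
    have h : |n| ≤ M := Int.le_floor.mpr (by push_cast; exact (mem_filter.mp hn).2)
    exact mem_Icc.mpr (abs_le.mp h)
  have hcard : ((#(Icc (-M) M) : ℤ) : ℝ) = 2 * M + 1 := by
    rw [Int.card_Icc_of_le _ _ (by omega)]; push_cast; ring
  calc (#{n ∈ s | |((n : ℤ) : ℝ)| ≤ R} : ℝ) ≤ ((#(Icc (-M) M) : ℤ) : ℝ) := by
        exact_mod_cast card_le_card hsub
    _ ≤ 2 * R + 1 := by rw [hcard]; linarith [Int.floor_le R]

lemma card_filter_mul_wR_rpow_lt_le {θ δ A : ℝ} (hθ0 : 0 < θ) (hδ0 : 0 < δ) (hA : 0 ≤ A)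
    (s : Finset ℤ) :
    (#{n ∈ s | δ * wR n ^ (θ / 4) < A} : ℝ) ≤ 2 * (A / δ) ^ (4 / θ) + 1 := by
  refine le_trans ?_ (card_filter_abs_le_le s (by positivity))
  gcongr with n _
  intro hlt
  have hw : 0 ≤ wR n := zero_le_one.trans (one_le_wR n)
  have hlt' : wR n ^ (θ / 4) < A / δ := by rw [lt_div_iff₀ hδ0]; linarith
  calc |(n : ℝ)| ≤ wR n := abs_le_wR n
    _ = (wR n ^ (θ / 4)) ^ (4 / θ) := by rw [← rpow_mul hw]; field_simp; simp
    _ ≤ (A / δ) ^ (4 / θ) := by gcongr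

lemma rpow_div_div_le {θ δ A : ℝ} (hθ0 : 0 < θ) (hθ1 : θ ≤ 1) (hδ0 : 0 < δ) (hδ1 : δ ≤ 1)
    (hA : 0 ≤ A) : (A / δ) ^ (4 / θ) / δ ≤ A ^ (4 / θ) * δ ^ (-(5 / θ)) := by
  have hexp : δ ^ (5 / θ) ≤ δ ^ (4 / θ) * δ := by
    rw [← rpow_add_one hδ0.ne']
    refine rpow_le_rpow_of_exponent_ge hδ0 hδ1 ?_
    rw [div_add_one hθ0.ne']; gcongr; linarith
  rw [div_rpow hA hδ0.le, div_div, rpow_neg hδ0.le, ← div_eq_mul_inv]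
  gcongr

lemma sum_log_one_add_sq_mul_wR_pow_four_le_add_card_mul {θ δ : ℝ} (hθ0 : 0 < θ) (hθ1 : θ ≤ 1)
    (hδ0 : 0 < δ) (hδ1 : δ ≤ 1) (s : Finset ℤ) (x : ℤ → ℝ) (hx : ∀ n ∈ s, 1 ≤ x n) :
    ∑ n ∈ s, log (1 + x n ^ 2 * wR n ^ 4) ≤ δ * ∑ n ∈ s, x n * wR n ^ (θ / 2)
      + #{n ∈ s | δ * wR n ^ (θ / 4) < 20 / θ} * (325 / (θ ^ 2 * δ)) := by
  calc ∑ n ∈ s, log (1 + x n ^ 2 * wR n ^ 4)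
      ≤ ∑ n ∈ s, (δ * (x n * wR n ^ (θ / 2))
          + if δ * wR n ^ (θ / 4) < 20 / θ then 325 / (θ ^ 2 * δ) else 0) := by
        refine sum_le_sum fun n hn => ?_
        split_ifs with hsmall
        · simpa only [mul_assoc] using log_one_add_sq_mul_pow_four_le_of_lt hθ0 hθ1 hδ0 hδ1
            (hx n hn) (one_le_wR n) hsmall
        · simpa only [mul_assoc, add_zero] using log_one_add_sq_mul_pow_four_le_of_le hθ0 hθ1
            (hx n hn) (one_le_wR n) (not_lt.mp hsmall)
    _ = _ := by rw [sum_add_distrib, ← mul_sum, sum_ite, sum_const_zero, add_zero, sum_const,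
          nsmul_eq_mul]

noncomputable def decayConst (θ : ℝ) : ℝ := 975 / θ ^ 2 * (20 / θ) ^ (4 / θ)

lemma sum_log_one_add_sq_mul_wR_pow_four_le {θ δ : ℝ} (hθ0 : 0 < θ) (hθ1 : θ ≤ 1)
    (hδ0 : 0 < δ) (hδ1 : δ ≤ 1) (s : Finset ℤ) (x : ℤ → ℝ) (hx : ∀ n ∈ s, 1 ≤ x n) :
    ∑ n ∈ s, log (1 + x n ^ 2 * wR n ^ 4) ≤
      δ * ∑ n ∈ s, x n * wR n ^ (θ / 2) + decayConst θ * δ ^ (-(5 / θ)) := by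
  have hA : 0 ≤ 20 / θ := by positivity
  set R := (20 / θ / δ) ^ (4 / θ)
  have hR : 1 ≤ R := one_le_rpow (by rw [le_div_iff₀ hδ0, le_div_iff₀ hθ0]; nlinarith)
    (by positivity)
  have hcard : (#{n ∈ s | δ * wR n ^ (θ / 4) < 20 / θ} : ℝ) ≤ 3 * R := by
    linarith [card_filter_mul_wR_rpow_lt_le hθ0 hδ0 hA s]
  have hconst : 3 * R * (325 / (θ ^ 2 * δ)) ≤ decayConst θ * δ ^ (-(5 / θ)) := by
    have h := rpow_div_div_le hθ0 hθ1 hδ0 hδ1 hA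
    calc 3 * R * (325 / (θ ^ 2 * δ)) = 975 / θ ^ 2 * (R / δ) := by field_simp; ring
      _ ≤ 975 / θ ^ 2 * ((20 / θ) ^ (4 / θ) * δ ^ (-(5 / θ))) := by gcongr
      _ = decayConst θ * δ ^ (-(5 / θ)) := by rw [decayConst]; ring
  have := sum_log_one_add_sq_mul_wR_pow_four_le_add_card_mul hθ0 hθ1 hδ0 hδ1 s x hx
  have := mul_le_mul_of_nonneg_right hcard (by positivity : 0 ≤ 325 / (θ ^ 2 * δ))
  linarith

lemma exp_neg_le_inv_prod_one_add_sq_mul_wR_pow_four {θ δ : ℝ} (hθ0 : 0 < θ) (hθ1 : θ ≤ 1)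
    (hδ0 : 0 < δ) (hδ1 : δ ≤ 1) (l : ℤ →₀ ℤ) :
    exp (-(decayConst θ * δ ^ (-(5 / θ))) - δ * ∑ n ∈ l.support, |(l n : ℝ)| * wR n ^ (θ / 2))
      ≤ (∏ n ∈ l.support, (1 + (l n : ℝ) ^ 2 * wR n ^ 4))⁻¹ := by
  have hpos : ∀ n, 0 < 1 + (l n : ℝ) ^ 2 * wR n ^ 4 := fun n => by positivity
  have hlog := sum_log_one_add_sq_mul_wR_pow_four_le hθ0 hθ1 hδ0 hδ1 l.support
    (fun n => |(l n : ℝ)|) fun n hn => by exact_mod_cast Int.one_le_abs (l.mem_support_iff.mp hn)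
  simp only [sq_abs] at hlog
  rw [← exp_log (prod_pos fun n _ => hpos n), ← exp_neg, log_prod fun n _ => (hpos n).ne']
  gcongr
  linarith

theorem stmt14 (θ : ℝ) (hθ : θ ∈ Set.Ioo (0:ℝ) 1) :
    ∃ C > (0:ℝ), ∃ δ₀ ∈ Set.Ioo (0:ℝ) 1, ∀ γ : ℝ, 0 < γ → ∀ V : ℤ → ℝ,
      (∀ l : ℤ →₀ ℤ, l ≠ 0 →
        γ * (∏ n ∈ l.support, (1 + (l n : ℝ) ^ 2 * wR n ^ 4))⁻¹
          ≤ |∑ n ∈ l.support, (l n : ℝ) * ((n : ℝ) ^ 2 + V n)|) →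
      ∀ δ ∈ Set.Ioo (0:ℝ) δ₀, ∀ l : ℤ →₀ ℤ, l ≠ 0 →
        γ * Real.exp (-(C * δ ^ (-(5 / θ)))
            - δ * ∑ n ∈ l.support, |(l n : ℝ)| * wR n ^ (θ / 2))
          ≤ |∑ n ∈ l.support, (l n : ℝ) * ((n : ℝ) ^ 2 + V n)| := by
  obtain ⟨hθ0, hθ1⟩ := hθ
  refine ⟨decayConst θ, by unfold decayConst; positivity, 1 / 2, by norm_num, ?_⟩
  intro γ hγ V hdiophantine δ ⟨hδ0, hδ⟩ l hl
  calc _ ≤ γ * (∏ n ∈ l.support, (1 + (l n : ℝ) ^ 2 * wR n ^ 4))⁻¹ := by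
        gcongr
        exact exp_neg_le_inv_prod_one_add_sq_mul_wR_pow_four hθ0 hθ1.le hδ0 (by linarith) l
    _ ≤ _ := hdiophantine l hl
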